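/- Let (X, ‖·‖_X) be a reflexive normed space whose dual X* is separable, let Φ = (φ_k)_{k≥1} be a sequence dense in the closed unit ball of X*, and let |u|_Φ := Σ_{k=1}^∞ 2^{−k}|⟨φ_k, u⟩|. Let (Y, ‖·‖_Y) be a normed space and T : X → Y an injective linear completely continuous operator. Then for every ε > 0 there exists a constant C_ε > 0 such that |u|_Φ ≤ ε‖u‖_X + C_ε‖Tu‖_Y for all u ∈ X. -/

import Mathlib

open Filter Topology

/-- The very weak norm associated with a sequence `Φ` in the dual:
`|u|_Φ = Σ_{k=1}^∞ 2^{-k} |⟨φ_k, u⟩|` (indexed here from `k = 0` with weight `2^{-(k+1)}`). -/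
noncomputable def veryWeakNorm {X : Type*} [NormedAddCommGroup X] [NormedSpace ℝ X]
    (Φ : ℕ → StrongDual ℝ X) (u : X) : ℝ :=
  ∑' k : ℕ, (2 : ℝ)⁻¹ ^ (k + 1) * |Φ k u|

section Aux

variable {X : Type*} [NormedAddCommGroup X] [NormedSpace ℝ X]
  {Φ : ℕ → StrongDual ℝ X}

lemma vwn_geo_summable (c : ℝ) : Summable (fun k : ℕ => (2:ℝ)⁻¹ ^ (k + 1) * c) := by
  have := ((summable_geometric_of_lt_one (r := (2:ℝ)⁻¹) (by norm_num) (by norm_num)).mul_right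
    ((2:ℝ)⁻¹ * c))
  refine this.congr (fun k => ?_)
  rw [pow_succ]; ring

lemma vwn_geo_tsum : (∑' k : ℕ, (2:ℝ)⁻¹ ^ (k + 1)) = 1 := by
  have h1 : (∑' k : ℕ, (2:ℝ)⁻¹ ^ k) = 2 := by
    rw [tsum_geometric_of_lt_one (by norm_num) (by norm_num)]; norm_num
  have h2 : (fun k : ℕ => (2:ℝ)⁻¹ ^ (k + 1)) = fun k : ℕ => (2:ℝ)⁻¹ ^ k * 2⁻¹ := by
    funext k; rw [pow_succ]
  rw [h2, tsum_mul_right, h1]; norm_num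

lemma vwn_abs_le (hΦball : ∀ k, ‖Φ k‖ ≤ 1) (u : X) (k : ℕ) : |Φ k u| ≤ ‖u‖ := by
  calc |Φ k u| = ‖Φ k u‖ := (Real.norm_eq_abs _).symm
  _ ≤ ‖Φ k‖ * ‖u‖ := (Φ k).le_opNorm u
  _ ≤ 1 * ‖u‖ := by gcongr; exact hΦball k
  _ = ‖u‖ := one_mul _

lemma vwn_summable (hΦball : ∀ k, ‖Φ k‖ ≤ 1) (u : X) :
    Summable (fun k : ℕ => (2:ℝ)⁻¹ ^ (k + 1) * |Φ k u|) := by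
  refine Summable.of_nonneg_of_le (fun k => by positivity) (fun k => ?_) (vwn_geo_summable ‖u‖)
  exact mul_le_mul_of_nonneg_left (vwn_abs_le hΦball u k) (by positivity)

lemma vwn_le_norm (hΦball : ∀ k, ‖Φ k‖ ≤ 1) (u : X) :
    veryWeakNorm Φ u ≤ ‖u‖ := by
  calc veryWeakNorm Φ u ≤ ∑' k : ℕ, (2:ℝ)⁻¹ ^ (k + 1) * ‖u‖ :=
        Summable.tsum_le_tsum (fun k => mul_le_mul_of_nonneg_left (vwn_abs_le hΦball u k) (by positivity))
          (vwn_summable hΦball u) (vwn_geo_summable ‖u‖)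
  _ = (∑' k : ℕ, (2:ℝ)⁻¹ ^ (k + 1)) * ‖u‖ := tsum_mul_right
  _ = ‖u‖ := by rw [vwn_geo_tsum, one_mul]

lemma vwn_smul (c : ℝ) (u : X) :
    veryWeakNorm Φ (c • u) = |c| * veryWeakNorm Φ u := by
  unfold veryWeakNorm
  rw [← tsum_mul_left]
  congr 1; funext k
  rw [map_smul, smul_eq_mul, abs_mul]; ring

end Aux

/-- If `X` is reflexive with separable dual and `T : X → Y` is an
injective completely continuous linear operator, then for every `ε > 0` there exists
`C_ε > 0` with `|u|_Φ ≤ ε ‖u‖_X + C_ε ‖T u‖_Y` for all `u ∈ X`. -/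
theorem reverse_ehrling_for_injective_completelyContinuous
    {X Y : Type*} [NormedAddCommGroup X] [NormedSpace ℝ X]
    [NormedAddCommGroup Y] [NormedSpace ℝ Y]
    [TopologicalSpace.SeparableSpace (StrongDual ℝ X)]
    (hrefl : Function.Surjective (NormedSpace.inclusionInDoubleDual ℝ X))
    (Φ : ℕ → StrongDual ℝ X)
    (hΦball : ∀ k, ‖Φ k‖ ≤ 1)
    (hΦdense : ∀ φ : StrongDual ℝ X, ‖φ‖ ≤ 1 → φ ∈ closure (Set.range Φ))
    (T : X →ₗ[ℝ] Y) (hTinj : Function.Injective T)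
    (hT : ∀ (u : ℕ → X) (x : X),
      (∀ φ : StrongDual ℝ X,
        Filter.Tendsto (fun n => φ (u n)) Filter.atTop (nhds (φ x))) →
      Filter.Tendsto (fun n => T (u n)) Filter.atTop (nhds (T x))) :
    ∀ ε > (0 : ℝ), ∃ C > (0 : ℝ), ∀ u : X, veryWeakNorm Φ u ≤ ε * ‖u‖ + C * ‖T u‖ := by
  intro ε hε
  by_contra hcon
  push_neg at hcon
  choose! u hu using fun n : ℕ => hcon ((n : ℝ) + 1) (by positivity)
  -- hu n : ε * ‖u n‖ + ((n:ℝ)+1) * ‖T (u n)‖ < veryWeakNorm Φ (u n)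
  have hune : ∀ n, u n ≠ 0 := by
    intro n h0
    have := hu n
    rw [h0] at this
    simp [veryWeakNorm] at this
  set v : ℕ → X := fun n => ‖u n‖⁻¹ • u n with hv_def
  have hvnorm : ∀ n, ‖v n‖ = 1 := by
    intro n
    rw [hv_def]
    simp only [norm_smul, norm_inv, norm_norm]
    exact inv_mul_cancel₀ (norm_ne_zero_iff.2 (hune n))
  have hv : ∀ n : ℕ, ε + ((n : ℝ) + 1) * ‖T (v n)‖ < veryWeakNorm Φ (v n) := by
    intro n
    have hpos : (0:ℝ) < ‖u n‖ := norm_pos_iff.2 (hune n)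
    have h1 : veryWeakNorm Φ (v n) = ‖u n‖⁻¹ * veryWeakNorm Φ (u n) := by
      rw [hv_def]
      simp only [vwn_smul, abs_inv, abs_norm]
    have h2 : ‖T (v n)‖ = ‖u n‖⁻¹ * ‖T (u n)‖ := by
      rw [hv_def]
      simp only [map_smul, norm_smul, norm_inv, norm_norm]
    rw [h1, h2]
    have := mul_lt_mul_of_pos_left (hu n) (inv_pos.2 hpos)
    calc ε + ((n:ℝ) + 1) * (‖u n‖⁻¹ * ‖T (u n)‖)
        = ‖u n‖⁻¹ * (ε * ‖u n‖ + ((n:ℝ) + 1) * ‖T (u n)‖) := by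
          field_simp
    _ < ‖u n‖⁻¹ * veryWeakNorm Φ (u n) := this
  -- T (v n) → 0
  have hTv0 : Tendsto (fun n => T (v n)) atTop (𝓝 0) := by
    have hbound : ∀ n : ℕ, ‖T (v n)‖ ≤ 1 / ((n : ℝ) + 1) := by
      intro n
      have h1 : ((n:ℝ) + 1) * ‖T (v n)‖ < 1 := by
        have := hv n
        have h2 := vwn_le_norm hΦball (v n)
        rw [hvnorm n] at h2
        nlinarith
      rw [le_div_iff₀ (by positivity)]
      nlinarith [norm_nonneg (T (v n))]
    rw [tendsto_zero_iff_norm_tendsto_zero]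
    refine squeeze_zero (fun n => norm_nonneg _) hbound ?_
    exact tendsto_one_div_add_atTop_nhds_zero_nat
  -- diagonal extraction
  have hmem : ∀ n, (fun k => Φ k (v n)) ∈ Set.pi Set.univ (fun _ : ℕ => Set.Icc (-1:ℝ) 1) := by
    intro n k _
    have := vwn_abs_le hΦball (v n) k
    rw [hvnorm n] at this
    exact abs_le.1 this
  obtain ⟨a, -, g, hgmono, hga⟩ :=
    (isCompact_univ_pi (fun _ : ℕ => isCompact_Icc)).tendsto_subseq hmem
  have hak : ∀ k, Tendsto (fun n => Φ k (v (g n))) atTop (𝓝 (a k)) := by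
    intro k
    exact (tendsto_pi_nhds.1 hga) k
  set w : ℕ → X := fun n => v (g n) with hw_def
  have hwnorm : ∀ n, ‖w n‖ = 1 := fun n => hvnorm (g n)
  -- Cauchy for unit-ball functionals
  have hcauchy : ∀ φ : StrongDual ℝ X, ‖φ‖ ≤ 1 → CauchySeq (fun n => φ (w n)) := by
    intro φ hφ
    rw [Metric.cauchySeq_iff]
    intro δ hδ
    obtain ⟨ψ, ⟨k, hk⟩, hdist⟩ := Metric.mem_closure_iff.1 (hΦdense φ hφ) (δ/4) (by linarith)
    have hck : CauchySeq (fun n => Φ k (w n)) := (hak k).cauchySeq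
    obtain ⟨N, hN⟩ := Metric.cauchySeq_iff.1 hck (δ/2) (by linarith)
    refine ⟨N, fun m hm n hn => ?_⟩
    have key : ∀ j : ℕ, |φ (w j) - Φ k (w j)| < δ/4 := by
      intro j
      have : |(φ - Φ k) (w j)| ≤ ‖φ - Φ k‖ * ‖w j‖ := by
        rw [← Real.norm_eq_abs]; exact (φ - Φ k).le_opNorm _
      rw [hwnorm j, mul_one] at this
      have hnm : ‖φ - Φ k‖ < δ/4 := by
        rw [← dist_eq_norm]
        rw [← hk] at hdist
        exact hdist
      calc |φ (w j) - Φ k (w j)| = |(φ - Φ k) (w j)| := by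
            simp [ContinuousLinearMap.sub_apply]
      _ ≤ ‖φ - Φ k‖ := this
      _ < δ/4 := hnm
    have h1 := key m
    have h2 := key n
    have h3 := hN m hm n hn
    rw [Real.dist_eq] at h3 ⊢
    calc |φ (w m) - φ (w n)| ≤ |φ (w m) - Φ k (w m)| + |Φ k (w m) - φ (w n)| :=
          abs_sub_le _ _ _
    _ ≤ |φ (w m) - Φ k (w m)| + (|Φ k (w m) - Φ k (w n)| + |Φ k (w n) - φ (w n)|) :=
          add_le_add_right (abs_sub_le _ _ _) _
    _ < δ/4 + (δ/2 + δ/4) := by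
        have h2' : |Φ k (w n) - φ (w n)| < δ/4 := by rw [abs_sub_comm]; exact h2
        gcongr
    _ = δ := by ring
  -- limits exist for all functionals
  have hlim : ∀ φ : StrongDual ℝ X, ∃ l : ℝ, Tendsto (fun n => φ (w n)) atTop (𝓝 l) := by
    intro φ
    set r : ℝ := ‖φ‖ + 1 with hr_def
    have hrpos : (0:ℝ) < r := by positivity
    set ψ : StrongDual ℝ X := r⁻¹ • φ with hψ_def
    have hψnorm : ‖ψ‖ ≤ 1 := by
      rw [hψ_def, norm_smul, norm_inv, Real.norm_eq_abs, abs_of_pos hrpos]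
      calc r⁻¹ * ‖φ‖ ≤ r⁻¹ * r :=
            mul_le_mul_of_nonneg_left (by rw [hr_def]; linarith) (by positivity)
      _ = 1 := inv_mul_cancel₀ (ne_of_gt hrpos)
    obtain ⟨l, hl⟩ := cauchySeq_tendsto_of_complete (hcauchy ψ hψnorm)
    refine ⟨r * l, ?_⟩
    have : (fun n => φ (w n)) = fun n => r * ψ (w n) := by
      funext n
      rw [hψ_def]
      simp only [ContinuousLinearMap.smul_apply, smul_eq_mul]
      field_simp
    rw [this]
    exact hl.const_mul r
  choose L hL using hlim
  -- L is a bounded linear functional on the dual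
  have hLadd : ∀ φ ψ : StrongDual ℝ X, L (φ + ψ) = L φ + L ψ := by
    intro φ ψ
    refine tendsto_nhds_unique (hL (φ + ψ)) ?_
    have : (fun n => (φ + ψ) (w n)) = fun n => φ (w n) + ψ (w n) := by
      funext n; simp [ContinuousLinearMap.add_apply]
    rw [this]
    exact (hL φ).add (hL ψ)
  have hLsmul : ∀ (c : ℝ) (φ : StrongDual ℝ X), L (c • φ) = c * L φ := by
    intro c φ
    refine tendsto_nhds_unique (hL (c • φ)) ?_
    have : (fun n => (c • φ) (w n)) = fun n => c * φ (w n) := by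
      funext n; simp [ContinuousLinearMap.smul_apply]
    rw [this]
    exact (hL φ).const_mul c
  have hLbound : ∀ φ : StrongDual ℝ X, ‖L φ‖ ≤ 1 * ‖φ‖ := by
    intro φ
    rw [one_mul, Real.norm_eq_abs]
    have habs : Tendsto (fun n => |φ (w n)|) atTop (𝓝 |L φ|) := (hL φ).abs
    refine le_of_tendsto habs (Eventually.of_forall fun n => ?_)
    have : |φ (w n)| ≤ ‖φ‖ * ‖w n‖ := by
      rw [← Real.norm_eq_abs]; exact φ.le_opNorm _
    rw [hwnorm n, mul_one] at this
    exact this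
  set Llin : StrongDual ℝ X →ₗ[ℝ] ℝ :=
    { toFun := L, map_add' := hLadd, map_smul' := hLsmul } with hLlin_def
  set Lc : StrongDual ℝ (StrongDual ℝ X) :=
    Llin.mkContinuous 1 hLbound with hLc_def
  obtain ⟨x0, hx0⟩ := hrefl Lc
  have hx0app : ∀ φ : StrongDual ℝ X, φ x0 = L φ := by
    intro φ
    have := congrArg (fun f => f φ) hx0
    simpa [NormedSpace.dual_def, hLc_def, hLlin_def, LinearMap.mkContinuous_apply] using this
  have hweak : ∀ φ : StrongDual ℝ X, Tendsto (fun n => φ (w n)) atTop (𝓝 (φ x0)) := by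
    intro φ; rw [hx0app φ]; exact hL φ
  -- T x0 = 0, hence x0 = 0
  have hTw : Tendsto (fun n => T (w n)) atTop (𝓝 (T x0)) := hT w x0 hweak
  have hTw0 : Tendsto (fun n => T (w n)) atTop (𝓝 0) := by
    have : Tendsto (fun n => T (v (g n))) atTop (𝓝 0) :=
      hTv0.comp hgmono.tendsto_atTop
    exact this
  have hx00 : x0 = 0 := by
    apply hTinj
    rw [map_zero]
    exact tendsto_nhds_unique hTw hTw0
  have hweak0 : ∀ φ : StrongDual ℝ X, Tendsto (fun n => φ (w n)) atTop (𝓝 0) := by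
    intro φ
    have := hweak φ
    rw [hx00, map_zero] at this
    exact this
  -- veryWeakNorm (w n) → 0 by dominated convergence
  have hvwn0 : Tendsto (fun n => veryWeakNorm Φ (w n)) atTop (𝓝 0) := by
    have hzero : (0:ℝ) = ∑' k : ℕ, (0:ℝ) := by rw [tsum_zero]
    rw [hzero]
    unfold veryWeakNorm
    refine tendsto_tsum_of_dominated_convergence (f := fun n k => (2:ℝ)⁻¹ ^ (k+1) * |Φ k (w n)|)
      (bound := fun k => (2:ℝ)⁻¹ ^ (k+1)) ?_ ?_ ?_
    · have := vwn_geo_summable (1:ℝ)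
      simpa using this
    · intro k
      have h1 : Tendsto (fun n => |Φ k (w n)|) atTop (𝓝 0) := by
        have := (hweak0 (Φ k)).abs
        simpa using this
      have := h1.const_mul ((2:ℝ)⁻¹ ^ (k+1))
      simpa using this
    · refine Eventually.of_forall fun n k => ?_
      have h1 : |Φ k (w n)| ≤ 1 := by
        have := vwn_abs_le hΦball (w n) k
        rwa [hwnorm n] at this
      rw [Real.norm_eq_abs, abs_of_nonneg (by positivity)]
      calc (2:ℝ)⁻¹ ^ (k+1) * |Φ k (w n)| ≤ (2:ℝ)⁻¹ ^ (k+1) * 1 :=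
            mul_le_mul_of_nonneg_left h1 (by positivity)
      _ = (2:ℝ)⁻¹ ^ (k+1) := mul_one _
  -- contradiction: ε < veryWeakNorm Φ (w n) for all n
  have hge : ε ≤ 0 := by
    refine ge_of_tendsto hvwn0 (Eventually.of_forall fun n => ?_)
    have := hv (g n)
    have hnn : (0:ℝ) ≤ ((g n : ℝ) + 1) * ‖T (v (g n))‖ := by positivity
    have : ε < veryWeakNorm Φ (v (g n)) := by linarith
    exact le_of_lt this
  linarith
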